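/- arXiv:1912.12307 — 11 statements merged into one kernel-verified Lean document; each statement's English description precedes it below -/
import Mathlib

section
/- Let T and S be symmetric linear operators on E with V := T − S positive semidefinite. Let E0, E1, ε0, ε1 be real numbers and ψ, χ unit vectors in E such that: (i) T ψ = E0 • ψ and re⟪v, T v⟫ ≥ E0·‖v‖² for all v ∈ E (ψ is a ground state of T with ground energy E0); (ii) E1 is the least element of the set {re⟪v, T v⟫ : ‖v‖ = 1 and ⟪ψ, v⟫ = 0}, and E1 > E0 (the gap of T is positive); (iii) S χ = ε0 • χ and re⟪v, S v⟫ ≥ ε0·‖v‖² for all v ∈ E; (iv) re⟪v, S v⟫ ≥ ε1 for every unit vector v with ⟪χ, v⟫ = 0, and ε1 > ε0 (the gap of S is positive). Then ‖⟪χ, ψ⟫‖² ≥ 1 − re⟪χ, V χ⟫ / (ε1 − ε0). -/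
open scoped InnerProductSpace

/-!
Write `ψ = ⟪χ, ψ⟫ χ + w` with `w ⊥ χ` and `p = ‖⟪χ, ψ⟫‖²`. Since `χ` is an eigenvector of the
symmetric `S`, the cross terms vanish and the gap of `S` gives
`ε0 p + ε1 (1 - p) ≤ re ⟪ψ, S ψ⟫`. Positivity of `V` and the variational principle for `T` give
`re ⟪ψ, S ψ⟫ ≤ re ⟪ψ, T ψ⟫ = E0 ≤ re ⟪χ, T χ⟫ = ε0 + re ⟪χ, V χ⟫`, so
`(ε1 - ε0) (1 - p) ≤ re ⟪χ, V χ⟫`.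
-/

namespace LinearMap

variable {𝕜 E : Type*} [RCLike 𝕜] [NormedAddCommGroup E] [InnerProductSpace 𝕜 E]

open RCLike

theorem re_inner_map_self_smul (S : E →ₗ[𝕜] E) (c : 𝕜) (v : E) :
    re ⟪c • v, S (c • v)⟫_𝕜 = ‖c‖ ^ 2 * re ⟪v, S v⟫_𝕜 := by
  rw [map_smul, inner_smul_left, inner_smul_right, ← mul_assoc, RCLike.conj_mul, ← ofReal_pow,
    re_ofReal_mul]

theorem re_inner_map_self_of_eq_smul {S : E →ₗ[𝕜] E} {μ : ℝ} {χ : E}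
    (hSχ : S χ = (μ : 𝕜) • χ) : re ⟪χ, S χ⟫_𝕜 = μ * ‖χ‖ ^ 2 := by
  rw [hSχ, inner_smul_right, inner_self_eq_norm_sq_to_K, ← ofReal_pow, ← ofReal_mul, ofReal_re]

theorem IsSymmetric.re_inner_map_self_smul_add_of_inner_eq_zero {S : E →ₗ[𝕜] E}
    (hS : S.IsSymmetric) {μ : ℝ} {χ w : E} (hSχ : S χ = (μ : 𝕜) • χ) (hw : ⟪χ, w⟫_𝕜 = 0)
    (a : 𝕜) :
    re ⟪a • χ + w, S (a • χ + w)⟫_𝕜 = μ * ‖a‖ ^ 2 * ‖χ‖ ^ 2 + re ⟪w, S w⟫_𝕜 := by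
  have hχSw : ⟪a • χ, S w⟫_𝕜 = 0 := by
    rw [← hS, map_smul, hSχ, inner_smul_left, inner_smul_left, hw, mul_zero, mul_zero]
  have hwSχ : ⟪w, S (a • χ)⟫_𝕜 = 0 := by rw [← hS, inner_eq_zero_symm, hχSw]
  rw [map_add, inner_add_left, inner_add_right, inner_add_right, hχSw, hwSχ, add_zero,
    zero_add, map_add, re_inner_map_self_smul, re_inner_map_self_of_eq_smul hSχ]
  ring

theorem mul_norm_sq_le_re_inner_map_self_of_inner_eq_zero {S : E →ₗ[𝕜] E} {χ : E} {ν : ℝ}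
    (hgap : ∀ v : E, ‖v‖ = 1 → ⟪χ, v⟫_𝕜 = 0 → ν ≤ re ⟪v, S v⟫_𝕜) {w : E}
    (hw : ⟪χ, w⟫_𝕜 = 0) : ν * ‖w‖ ^ 2 ≤ re ⟪w, S w⟫_𝕜 := by
  rcases eq_or_ne w 0 with rfl | hw0
  · simp
  set u := ((‖w‖ : 𝕜)⁻¹) • w with hu_def
  clear_value u
  have hu : ‖u‖ = 1 := hu_def ▸ norm_smul_inv_norm hw0
  have hwu : w = (‖w‖ : 𝕜) • u := by
    rw [hu_def, smul_inv_smul₀ (ofReal_ne_zero.mpr (norm_ne_zero_iff.mpr hw0))]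
  have hχu : ⟪χ, u⟫_𝕜 = 0 := by rw [hu_def, inner_smul_right, hw, mul_zero]
  calc ν * ‖w‖ ^ 2 ≤ ‖w‖ ^ 2 * re ⟪u, S u⟫_𝕜 := by
        rw [mul_comm]; gcongr; exact hgap u hu hχu
    _ = re ⟪(‖w‖ : 𝕜) • u, S ((‖w‖ : 𝕜) • u)⟫_𝕜 := by
      rw [re_inner_map_self_smul, norm_ofReal, abs_norm]
    _ = re ⟪w, S w⟫_𝕜 := by rw [← hwu]

theorem IsSymmetric.le_re_inner_map_self_of_spectral_gap {S : E →ₗ[𝕜] E} (hS : S.IsSymmetric)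
    {μ ν : ℝ} {χ : E} (hχ : ‖χ‖ = 1) (hSχ : S χ = (μ : 𝕜) • χ)
    (hgap : ∀ v : E, ‖v‖ = 1 → ⟪χ, v⟫_𝕜 = 0 → ν ≤ re ⟪v, S v⟫_𝕜) (v : E) :
    μ * ‖⟪χ, v⟫_𝕜‖ ^ 2 + ν * (‖v‖ ^ 2 - ‖⟪χ, v⟫_𝕜‖ ^ 2) ≤ re ⟪v, S v⟫_𝕜 := by
  set a := ⟪χ, v⟫_𝕜
  set w := v - a • χ
  have hw : ⟪χ, w⟫_𝕜 = 0 := by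
    rw [inner_sub_right, inner_smul_right, inner_self_eq_one_of_norm_eq_one hχ, mul_one, sub_self]
  have hv : v = a • χ + w := (add_sub_cancel _ _).symm
  have hpyth : ‖v‖ ^ 2 = ‖a‖ ^ 2 + ‖w‖ ^ 2 := by
    have h := norm_add_sq_eq_norm_sq_add_norm_sq_of_inner_eq_zero (𝕜 := 𝕜) (a • χ) w
      (by rw [inner_smul_left, hw, mul_zero])
    rw [← hv, norm_smul, hχ, mul_one] at h
    simpa only [sq] using h
  have hwS := mul_norm_sq_le_re_inner_map_self_of_inner_eq_zero hgap hw
  rw [hv, hS.re_inner_map_self_smul_add_of_inner_eq_zero hSχ hw, ← hv, hpyth, hχ]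
  linarith

end LinearMap

open LinearMap in
theorem claim1_general
    {E : Type*} [NormedAddCommGroup E] [InnerProductSpace ℂ E]
    (T S : E →ₗ[ℂ] E) (hS : S.IsSymmetric)
    (hV : ∀ v : E, 0 ≤ (⟪v, (T - S) v⟫_ℂ).re)
    (E0 ε0 ε1 : ℝ) (ψ χ : E) (hψ : ‖ψ‖ = 1) (hχ : ‖χ‖ = 1)
    (hTψ : T ψ = (E0 : ℂ) • ψ)
    (hTgr : ∀ v : E, E0 * ‖v‖ ^ 2 ≤ (⟪v, T v⟫_ℂ).re)
    (hSχ : S χ = (ε0 : ℂ) • χ)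
    (hSgap : ∀ v : E, ‖v‖ = 1 → ⟪χ, v⟫_ℂ = 0 → ε1 ≤ (⟪v, S v⟫_ℂ).re)
    (hgapS : ε0 < ε1) :
    1 - (⟪χ, (T - S) χ⟫_ℂ).re / (ε1 - ε0) ≤ ‖⟪χ, ψ⟫_ℂ‖ ^ 2 := by
  set p := ‖⟪χ, ψ⟫_ℂ‖ ^ 2
  have hψS : ε0 * p + ε1 * (1 - p) ≤ (⟪ψ, S ψ⟫_ℂ).re := by
    simpa [hψ] using hS.le_re_inner_map_self_of_spectral_gap hχ hSχ hSgap ψ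
  have hψT : (⟪ψ, T ψ⟫_ℂ).re = E0 := by simpa [hψ] using re_inner_map_self_of_eq_smul hTψ
  have hχS : (⟪χ, S χ⟫_ℂ).re = ε0 := by simpa [hχ] using re_inner_map_self_of_eq_smul hSχ
  have hVψ : (⟪ψ, S ψ⟫_ℂ).re ≤ (⟪ψ, T ψ⟫_ℂ).re := by simpa [inner_sub_right] using hV ψ
  have hVχ : (⟪χ, (T - S) χ⟫_ℂ).re = (⟪χ, T χ⟫_ℂ).re - (⟪χ, S χ⟫_ℂ).re := by simp
  have hχT : E0 ≤ (⟪χ, T χ⟫_ℂ).re := by simpa [hχ] using hTgr χ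
  rw [sub_le_comm, le_div_iff₀ (sub_pos.mpr hgapS)]
  linarith

/-- Claim 1: lower bound on the overlap of the ground state `ψ` of the perturbed
Hamiltonian `T = S + V` with the ground state `χ` of `S`, in terms of the
expectation of the positive perturbation `V = T - S` in `χ` and the gap
`ε1 - ε0` of `S`. -/
theorem claim1
    {E : Type*} [NormedAddCommGroup E] [InnerProductSpace ℂ E]
    [FiniteDimensional ℂ E] [Nontrivial E]
    (T S : E →ₗ[ℂ] E) (hT : T.IsSymmetric) (hS : S.IsSymmetric)
    (hV : ∀ v : E, 0 ≤ (⟪v, (T - S) v⟫_ℂ).re)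
    (E0 E1 ε0 ε1 : ℝ) (ψ χ : E) (hψ : ‖ψ‖ = 1) (hχ : ‖χ‖ = 1)
    (hTψ : T ψ = (E0 : ℂ) • ψ)
    (hTgr : ∀ v : E, E0 * ‖v‖ ^ 2 ≤ (⟪v, T v⟫_ℂ).re)
    (hE1 : IsLeast {r : ℝ | ∃ v : E, ‖v‖ = 1 ∧ ⟪ψ, v⟫_ℂ = 0 ∧ r = (⟪v, T v⟫_ℂ).re} E1)
    (hgapT : E0 < E1)
    (hSχ : S χ = (ε0 : ℂ) • χ)
    (hSgr : ∀ v : E, ε0 * ‖v‖ ^ 2 ≤ (⟪v, S v⟫_ℂ).re)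
    (hSgap : ∀ v : E, ‖v‖ = 1 → ⟪χ, v⟫_ℂ = 0 → ε1 ≤ (⟪v, S v⟫_ℂ).re)
    (hgapS : ε0 < ε1) :
    1 - (⟪χ, (T - S) χ⟫_ℂ).re / (ε1 - ε0) ≤ ‖⟪χ, ψ⟫_ℂ‖ ^ 2 :=
  claim1_general T S hS hV E0 ε0 ε1 ψ χ hψ hχ hTψ hTgr hSχ hSgap hgapS
end

section
/- Let T be a symmetric linear operator on E, let E0, E1 be real numbers, and let ψ be a unit vector with T ψ = E0 • ψ. Suppose re⟪v, T v⟫ ≥ E1 for every unit vector v with ⟪ψ, v⟫ = 0. Then for every unit vector χ, re⟪χ, T χ⟫ ≥ E1 − (E1 − E0)·‖⟪ψ, χ⟫‖². -/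
open scoped InnerProductSpace

/-!
Write `χ = a • ψ + w` with `a = ⟪ψ, χ⟫` and `w ⊥ ψ`. Since `T` is symmetric and `ψ` is an
eigenvector, the cross terms of `⟪χ, T χ⟫` vanish, so `re⟪χ, T χ⟫ = E0 ‖a‖² + re⟪w, T w⟫`.
By homogeneity the gap hypothesis gives `re⟪w, T w⟫ ≥ E1 ‖w‖²`, and `‖w‖² = 1 - ‖a‖²`.
-/

section

variable {𝕜 E : Type*} [RCLike 𝕜] [NormedAddCommGroup E] [InnerProductSpace 𝕜 E]

theorem inner_sub_inner_smul_eq_zero_of_norm_eq_one {ψ : E} (hψ : ‖ψ‖ = 1) (χ : E) :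
    ⟪ψ, χ - ⟪ψ, χ⟫_𝕜 • ψ⟫_𝕜 = 0 := by
  simp [inner_sub_right, inner_smul_right, inner_self_eq_norm_sq_to_K, hψ]

theorem re_inner_map_smul_self (T : E →ₗ[𝕜] E) (c : 𝕜) (v : E) :
    RCLike.re ⟪c • v, T (c • v)⟫_𝕜 = ‖c‖ ^ 2 * RCLike.re ⟪v, T v⟫_𝕜 := by
  rw [map_smul, inner_smul_left, inner_smul_right, ← mul_assoc, RCLike.conj_mul,
    ← RCLike.ofReal_pow, RCLike.re_ofReal_mul]

theorem mul_norm_sq_le_re_inner_map_self_of_orthogonal (T : E →ₗ[𝕜] E) {ψ : E} {c : ℝ}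
    (hgap : ∀ v : E, ‖v‖ = 1 → ⟪ψ, v⟫_𝕜 = 0 → c ≤ RCLike.re ⟪v, T v⟫_𝕜)
    {w : E} (hw : ⟪ψ, w⟫_𝕜 = 0) :
    c * ‖w‖ ^ 2 ≤ RCLike.re ⟪w, T w⟫_𝕜 := by
  rcases eq_or_ne w 0 with rfl | hw0
  · simp
  have hpos : 0 < ‖w‖ := norm_pos_iff.mpr hw0
  set s : 𝕜 := ((‖w‖⁻¹ : ℝ) : 𝕜)
  have hs : ‖s‖ = ‖w‖⁻¹ := by simp [s]
  have hunit : ‖s • w‖ = 1 := by rw [norm_smul, hs, inv_mul_cancel₀ hpos.ne']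
  have horth : ⟪ψ, s • w⟫_𝕜 = 0 := by rw [inner_smul_right, hw, mul_zero]
  have h := hgap _ hunit horth
  rw [re_inner_map_smul_self, hs, inv_pow, inv_mul_eq_div, le_div_iff₀ (by positivity)] at h
  exact h

theorem LinearMap.IsSymmetric.inner_map_add_of_eigenvector {T : E →ₗ[𝕜] E} (hT : T.IsSymmetric)
    {μ : ℝ} {u w : E} (hu : T u = (μ : 𝕜) • u) (huw : ⟪u, w⟫_𝕜 = 0) :
    ⟪u + w, T (u + w)⟫_𝕜 = (μ : 𝕜) * (‖u‖ : 𝕜) ^ 2 + ⟪w, T w⟫_𝕜 := by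
  have hwu : ⟪w, u⟫_𝕜 = 0 := by rw [← inner_conj_symm, huw, map_zero]
  have huTw : ⟪u, T w⟫_𝕜 = 0 := by
    rw [← hT u w, hu, inner_smul_left, huw, mul_zero]
  rw [map_add, inner_add_left, inner_add_right, inner_add_right, huTw, hu,
    inner_smul_right, inner_smul_right, hwu, inner_self_eq_norm_sq_to_K]
  ring

end

theorem claim1_key_inequality_general
    {E : Type*} [NormedAddCommGroup E] [InnerProductSpace ℂ E]
    (T : E →ₗ[ℂ] E) (hT : T.IsSymmetric)
    (E0 E1 : ℝ) (ψ : E) (hψ : ‖ψ‖ = 1)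
    (hTψ : T ψ = (E0 : ℂ) • ψ)
    (hgap : ∀ v : E, ‖v‖ = 1 → ⟪ψ, v⟫_ℂ = 0 → E1 ≤ (⟪v, T v⟫_ℂ).re) :
    ∀ χ : E, ‖χ‖ = 1 →
      E1 - (E1 - E0) * ‖⟪ψ, χ⟫_ℂ‖ ^ 2 ≤ (⟪χ, T χ⟫_ℂ).re := by
  intro χ hχ
  set a := ⟪ψ, χ⟫_ℂ
  set w := χ - a • ψ
  have hψw : ⟪ψ, w⟫_ℂ = 0 := inner_sub_inner_smul_eq_zero_of_norm_eq_one hψ χ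
  have haψw : ⟪a • ψ, w⟫_ℂ = 0 := by rw [inner_smul_left, hψw, mul_zero]
  have hχ_eq : a • ψ + w = χ := add_sub_cancel _ _
  have haψ : ‖a • ψ‖ = ‖a‖ := by rw [norm_smul, hψ, mul_one]
  have hpyth : ‖w‖ ^ 2 = 1 - ‖a‖ ^ 2 := by
    have h := norm_add_sq_eq_norm_sq_add_norm_sq_of_inner_eq_zero _ _ haψw
    rw [hχ_eq, hχ, haψ] at h
    nlinarith
  have hTaψ : T (a • ψ) = (E0 : ℂ) • (a • ψ) := by rw [map_smul, hTψ, smul_comm]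
  have hexp : (⟪χ, T χ⟫_ℂ).re = E0 * ‖a‖ ^ 2 + (⟪w, T w⟫_ℂ).re := by
    rw [← hχ_eq, hT.inner_map_add_of_eigenvector hTaψ haψw, haψ, Complex.add_re]
    norm_cast
  have hw : E1 * ‖w‖ ^ 2 ≤ (⟪w, T w⟫_ℂ).re :=
    mul_norm_sq_le_re_inner_map_self_of_orthogonal T hgap hψw
  rw [hpyth] at hw
  linarith

/-- Key intermediate inequality of Claim 1: if `ψ` is a unit eigenvector of the
symmetric operator `T` with eigenvalue `E0`, and the expectation of `T` is at
least `E1` on unit vectors orthogonal to `ψ`, then for every unit vector `χ`,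
`re⟪χ, T χ⟫ ≥ E1 − (E1 − E0)·‖⟪ψ, χ⟫‖²`. -/
theorem claim1_key_inequality
    {E : Type*} [NormedAddCommGroup E] [InnerProductSpace ℂ E]
    [FiniteDimensional ℂ E] [Nontrivial E]
    (T : E →ₗ[ℂ] E) (hT : T.IsSymmetric)
    (E0 E1 : ℝ) (ψ : E) (hψ : ‖ψ‖ = 1)
    (hTψ : T ψ = (E0 : ℂ) • ψ)
    (hgap : ∀ v : E, ‖v‖ = 1 → ⟪ψ, v⟫_ℂ = 0 → E1 ≤ (⟪v, T v⟫_ℂ).re) :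
    ∀ χ : E, ‖χ‖ = 1 →
      E1 - (E1 - E0) * ‖⟪ψ, χ⟫_ℂ‖ ^ 2 ≤ (⟪χ, T χ⟫_ℂ).re :=
  claim1_key_inequality_general T hT E0 E1 ψ hψ hTψ hgap
end

section
/- Let T and S be symmetric linear operators on E with V := T − S positive semidefinite. Let E0, E1, ε0, ε1, V_U be real numbers and ψ, χ unit vectors in E such that: (i) T ψ = E0 • ψ and re⟪v, T v⟫ ≥ E0·‖v‖² for all v; (ii) E1 is the least element of the set {re⟪v, T v⟫ : ‖v‖ = 1 and ⟪ψ, v⟫ = 0}, and E1 > E0; (iii) S χ = ε0 • χ and re⟪v, S v⟫ ≥ ε0·‖v‖² for all v; (iv) re⟪v, S v⟫ ≥ ε1 for every unit vector v with ⟪χ, v⟫ = 0, and ε1 > ε0; (v) re⟪χ, V χ⟫ ≤ V_U. Then ‖⟪χ, ψ⟫‖² ≥ 1 − V_U / (ε1 − ε0). -/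
open scoped InnerProductSpace
open RCLike

/-!
Split `ψ = ⟪χ, ψ⟫ χ + w` with `w ⊥ χ`. Since `χ` is an eigenvector of the symmetric `S`, the
cross terms vanish and the gap of `S` above `χ` gives
`ε0 |⟪χ, ψ⟫|² + ε1 (1 - |⟪χ, ψ⟫|²) ≤ ⟪ψ, S ψ⟫`. Positivity of `V = T - S` bounds the right side by
`⟪ψ, T ψ⟫ = E0`, and the ground-state bound for `T` at `χ` gives `E0 ≤ ⟪χ, T χ⟫ = ε0 + ⟪χ, V χ⟫ ≤ ε0 + V_U`.
-/

section

variable {𝕜 E : Type*} [RCLike 𝕜] [NormedAddCommGroup E] [InnerProductSpace 𝕜 E]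

theorem re_inner_apply_self_of_eq_smul {T : E →ₗ[𝕜] E} {x : E} {μ : ℝ}
    (hx : T x = (μ : 𝕜) • x) : re ⟪x, T x⟫_𝕜 = μ * ‖x‖ ^ 2 := by
  rw [hx, inner_smul_real_right, smul_re, inner_self_eq_norm_sq_to_K, ← ofReal_pow, ofReal_re]

theorem re_inner_apply_smul_self (T : E →ₗ[𝕜] E) (x : E) (r : ℝ) :
    re ⟪(r : 𝕜) • x, T ((r : 𝕜) • x)⟫_𝕜 = r ^ 2 * re ⟪x, T x⟫_𝕜 := by
  rw [map_smul, inner_smul_real_left, inner_smul_real_right, smul_re, smul_re]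
  ring

theorem mul_norm_sq_le_re_inner_apply_self_of_inner_eq_zero {S : E →ₗ[𝕜] E} {χ w : E} {c : ℝ}
    (hgap : ∀ v : E, ‖v‖ = 1 → ⟪χ, v⟫_𝕜 = 0 → c ≤ re ⟪v, S v⟫_𝕜) (hw : ⟪χ, w⟫_𝕜 = 0) :
    c * ‖w‖ ^ 2 ≤ re ⟪w, S w⟫_𝕜 := by
  rcases eq_or_ne w 0 with rfl | hw0
  · simp
  have hpos : 0 < ‖w‖ := norm_pos_iff.mpr hw0
  have hunit : ‖((‖w‖⁻¹ : ℝ) : 𝕜) • w‖ = 1 := by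
    rw [norm_smul, norm_ofReal, abs_inv, abs_norm, inv_mul_cancel₀ hpos.ne']
  have horth : ⟪χ, ((‖w‖⁻¹ : ℝ) : 𝕜) • w⟫_𝕜 = 0 := by rw [inner_smul_right, hw, mul_zero]
  have h := hgap _ hunit horth
  rwa [re_inner_apply_smul_self, inv_pow, inv_mul_eq_div, le_div_iff₀ (by positivity)] at h

theorem inner_sub_inner_smul_eq_zero {χ : E} (hχ : ‖χ‖ = 1) (ψ : E) :
    ⟪χ, ψ - ⟪χ, ψ⟫_𝕜 • χ⟫_𝕜 = 0 := by
  rw [inner_sub_right, inner_smul_right, inner_self_eq_norm_sq_to_K, hχ]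
  simp

theorem norm_sq_smul_add_of_inner_eq_zero {χ w : E} (hχ : ‖χ‖ = 1) (hw : ⟪χ, w⟫_𝕜 = 0) (p : 𝕜) :
    ‖p • χ + w‖ ^ 2 = ‖p‖ ^ 2 + ‖w‖ ^ 2 := by
  have h := norm_add_sq_eq_norm_sq_add_norm_sq_of_inner_eq_zero (p • χ) w
    (by rw [inner_smul_left, hw, mul_zero])
  rw [norm_smul, hχ, mul_one] at h
  simpa only [sq] using h

theorem LinearMap.IsSymmetric.re_inner_apply_smul_add_of_inner_eq_zero {S : E →ₗ[𝕜] E}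
    (hS : S.IsSymmetric) {χ w : E} {μ : ℝ} (hχ : ‖χ‖ = 1) (hSχ : S χ = (μ : 𝕜) • χ)
    (hw : ⟪χ, w⟫_𝕜 = 0) (p : 𝕜) :
    re ⟪p • χ + w, S (p • χ + w)⟫_𝕜 = μ * ‖p‖ ^ 2 + re ⟪w, S w⟫_𝕜 := by
  have hwχ : ⟪w, χ⟫_𝕜 = 0 := by rw [← inner_conj_symm, hw, map_zero]
  have hχSw : ⟪χ, S w⟫_𝕜 = 0 := by rw [← hS, hSχ, inner_smul_real_left, hw, smul_zero]
  have hχχ : ⟪χ, χ⟫_𝕜 = 1 := by rw [inner_self_eq_norm_sq_to_K, hχ]; simp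
  simp only [map_add, map_smul, hSχ, inner_add_left, inner_add_right, inner_smul_left,
    inner_smul_right, hχχ, hwχ, hχSw, mul_one, mul_zero, add_zero, zero_add]
  rw [mul_left_comm, mul_conj, ← ofReal_pow, re_ofReal_mul, ofReal_re]

theorem LinearMap.IsSymmetric.eigenvalue_mul_add_gap_mul_le_re_inner_apply_self
    {S : E →ₗ[𝕜] E} (hS : S.IsSymmetric) {χ : E} {μ c : ℝ} (hχ : ‖χ‖ = 1)
    (hSχ : S χ = (μ : 𝕜) • χ) (hgap : ∀ v : E, ‖v‖ = 1 → ⟪χ, v⟫_𝕜 = 0 → c ≤ re ⟪v, S v⟫_𝕜)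
    (ψ : E) : μ * ‖⟪χ, ψ⟫_𝕜‖ ^ 2 + c * (‖ψ‖ ^ 2 - ‖⟪χ, ψ⟫_𝕜‖ ^ 2) ≤ re ⟪ψ, S ψ⟫_𝕜 := by
  set p := ⟪χ, ψ⟫_𝕜
  set w := ψ - p • χ
  have hw : ⟪χ, w⟫_𝕜 = 0 := inner_sub_inner_smul_eq_zero hχ ψ
  have hψ : ψ = p • χ + w := (add_sub_cancel _ _).symm
  calc μ * ‖p‖ ^ 2 + c * (‖ψ‖ ^ 2 - ‖p‖ ^ 2) = μ * ‖p‖ ^ 2 + c * ‖w‖ ^ 2 := by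
        rw [hψ, norm_sq_smul_add_of_inner_eq_zero hχ hw, add_sub_cancel_left]
    _ ≤ μ * ‖p‖ ^ 2 + re ⟪w, S w⟫_𝕜 := by
        gcongr; exact mul_norm_sq_le_re_inner_apply_self_of_inner_eq_zero hgap hw
    _ = re ⟪ψ, S ψ⟫_𝕜 := by rw [hψ, hS.re_inner_apply_smul_add_of_inner_eq_zero hχ hSχ hw]

end

theorem claim2_general
    {E : Type*} [NormedAddCommGroup E] [InnerProductSpace ℂ E]
    (T S : E →ₗ[ℂ] E) (hS : S.IsSymmetric)
    (hV : ∀ v : E, 0 ≤ (⟪v, (T - S) v⟫_ℂ).re)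
    (E0 ε0 ε1 VU : ℝ) (ψ χ : E) (hψ : ‖ψ‖ = 1) (hχ : ‖χ‖ = 1)
    (hTψ : T ψ = (E0 : ℂ) • ψ)
    (hTgr : ∀ v : E, E0 * ‖v‖ ^ 2 ≤ (⟪v, T v⟫_ℂ).re)
    (hSχ : S χ = (ε0 : ℂ) • χ)
    (hSgap : ∀ v : E, ‖v‖ = 1 → ⟪χ, v⟫_ℂ = 0 → ε1 ≤ (⟪v, S v⟫_ℂ).re)
    (hgapS : ε0 < ε1)
    (hVU : (⟪χ, (T - S) χ⟫_ℂ).re ≤ VU) :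
    1 - VU / (ε1 - ε0) ≤ ‖⟪χ, ψ⟫_ℂ‖ ^ 2 := by
  have hψT : (⟪ψ, T ψ⟫_ℂ).re = E0 := by
    simpa [hψ] using re_inner_apply_self_of_eq_smul hTψ
  have hχS : (⟪χ, S χ⟫_ℂ).re = ε0 := by
    simpa [hχ] using re_inner_apply_self_of_eq_smul hSχ
  have hψS : (⟪ψ, S ψ⟫_ℂ).re ≤ E0 := by
    have hVψ := hV ψ
    rw [LinearMap.sub_apply, inner_sub_right, Complex.sub_re] at hVψ
    linarith
  have hE0 : E0 ≤ ε0 + VU := by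
    have hTχ := hTgr χ
    rw [hχ] at hTχ
    rw [LinearMap.sub_apply, inner_sub_right, Complex.sub_re] at hVU
    linarith
  have hoverlap := hS.eigenvalue_mul_add_gap_mul_le_re_inner_apply_self hχ hSχ hSgap ψ
  rw [hψ, RCLike.re_to_complex] at hoverlap
  rw [sub_le_comm, le_div_iff₀ (sub_pos.2 hgapS)]
  linarith

/-- Claim 2: the overlap bound of Claim 1 with the exact expectation
`⟪χ, V χ⟫` of the positive perturbation `V = T - S` replaced by any upper
bound `V_U` for it. -/
theorem claim2
    {E : Type*} [NormedAddCommGroup E] [InnerProductSpace ℂ E]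
    [FiniteDimensional ℂ E] [Nontrivial E]
    (T S : E →ₗ[ℂ] E) (hT : T.IsSymmetric) (hS : S.IsSymmetric)
    (hV : ∀ v : E, 0 ≤ (⟪v, (T - S) v⟫_ℂ).re)
    (E0 E1 ε0 ε1 VU : ℝ) (ψ χ : E) (hψ : ‖ψ‖ = 1) (hχ : ‖χ‖ = 1)
    (hTψ : T ψ = (E0 : ℂ) • ψ)
    (hTgr : ∀ v : E, E0 * ‖v‖ ^ 2 ≤ (⟪v, T v⟫_ℂ).re)
    (hE1 : IsLeast {r : ℝ | ∃ v : E, ‖v‖ = 1 ∧ ⟪ψ, v⟫_ℂ = 0 ∧ r = (⟪v, T v⟫_ℂ).re} E1)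
    (hgapT : E0 < E1)
    (hSχ : S χ = (ε0 : ℂ) • χ)
    (hSgr : ∀ v : E, ε0 * ‖v‖ ^ 2 ≤ (⟪v, S v⟫_ℂ).re)
    (hSgap : ∀ v : E, ‖v‖ = 1 → ⟪χ, v⟫_ℂ = 0 → ε1 ≤ (⟪v, S v⟫_ℂ).re)
    (hgapS : ε0 < ε1)
    (hVU : (⟪χ, (T - S) χ⟫_ℂ).re ≤ VU) :
    1 - VU / (ε1 - ε0) ≤ ‖⟪χ, ψ⟫_ℂ‖ ^ 2 :=
  claim2_general T S hS hV E0 ε0 ε1 VU ψ χ hψ hχ hTψ hTgr hSχ hSgap hgapS hVU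
end

section
/- Let A and B be symmetric linear operators on E, let x₁ < x₂ be real numbers, and let χ₁, χ₂ be unit vectors such that for each i ∈ {1,2}, χᵢ minimizes the Rayleigh quotient of A − xᵢ • B, i.e. re⟪χᵢ, (A − xᵢ • B) χᵢ⟫ ≤ re⟪v, (A − xᵢ • B) v⟫ for every unit vector v. Then re⟪χ₁, B χ₁⟫ ≤ re⟪χ₂, B χ₂⟫. -/
open scoped InnerProductSpace

/- Adding the two minimality inequalities, each tested at the other minimizer, cancels `f` and
leaves `0 ≤ (x₂ - x₁) (g a₂ - g a₁)`. -/
theorem le_of_isMinOn_sub_mul {α : Type*} {s : Set α} {f g : α → ℝ} {x₁ x₂ : ℝ}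
    (hx : x₁ < x₂) {a₁ a₂ : α} (ha₁ : a₁ ∈ s) (ha₂ : a₂ ∈ s)
    (h₁ : IsMinOn (fun a ↦ f a - x₁ * g a) s a₁) (h₂ : IsMinOn (fun a ↦ f a - x₂ * g a) s a₂) :
    g a₁ ≤ g a₂ := by
  have h₁₂ : f a₁ - x₁ * g a₁ ≤ f a₂ - x₁ * g a₂ := h₁ ha₂
  have h₂₁ : f a₂ - x₂ * g a₂ ≤ f a₁ - x₂ * g a₁ := h₂ ha₁
  nlinarith

theorem re_inner_sub_ofReal_smul_apply_self {E : Type*} [NormedAddCommGroup E]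
    [InnerProductSpace ℂ E] (A B : E →ₗ[ℂ] E) (x : ℝ) (v : E) :
    (⟪v, (A - (x : ℂ) • B) v⟫_ℂ).re = (⟪v, A v⟫_ℂ).re - x * (⟪v, B v⟫_ℂ).re := by
  simp

theorem expectation_monotone_in_parameter_general
    {E : Type*} [NormedAddCommGroup E] [InnerProductSpace ℂ E]
    (A B : E →ₗ[ℂ] E)
    (x₁ x₂ : ℝ) (hx : x₁ < x₂)
    (χ₁ χ₂ : E) (hχ₁ : ‖χ₁‖ = 1) (hχ₂ : ‖χ₂‖ = 1)
    (hmin₁ : ∀ v : E, ‖v‖ = 1 →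
      (⟪χ₁, (A - (x₁ : ℂ) • B) χ₁⟫_ℂ).re ≤ (⟪v, (A - (x₁ : ℂ) • B) v⟫_ℂ).re)
    (hmin₂ : ∀ v : E, ‖v‖ = 1 →
      (⟪χ₂, (A - (x₂ : ℂ) • B) χ₂⟫_ℂ).re ≤ (⟪v, (A - (x₂ : ℂ) • B) v⟫_ℂ).re) :
    (⟪χ₁, B χ₁⟫_ℂ).re ≤ (⟪χ₂, B χ₂⟫_ℂ).re := by
  have isMinOn_of_min {x : ℝ} {χ : E}
      (hmin : ∀ v : E, ‖v‖ = 1 →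
        (⟪χ, (A - (x : ℂ) • B) χ⟫_ℂ).re ≤ (⟪v, (A - (x : ℂ) • B) v⟫_ℂ).re) :
      IsMinOn (fun v ↦ (⟪v, A v⟫_ℂ).re - x * (⟪v, B v⟫_ℂ).re) (Metric.sphere 0 1) χ :=
    isMinOn_iff.mpr fun v hv ↦ by
      simpa only [re_inner_sub_ofReal_smul_apply_self] using hmin v (mem_sphere_zero_iff_norm.mp hv)
  have hmem {χ : E} (hχ : ‖χ‖ = 1) : χ ∈ Metric.sphere (0 : E) 1 := mem_sphere_zero_iff_norm.mpr hχ
  exact le_of_isMinOn_sub_mul (g := fun v ↦ (⟪v, B v⟫_ℂ).re) hx (hmem hχ₁) (hmem hχ₂)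
    (isMinOn_of_min hmin₁) (isMinOn_of_min hmin₂)

/-- Variational monotonicity (proof of Lemma 1): if for `i = 1, 2` the unit
vector `χᵢ` minimizes the Rayleigh quotient of `A − xᵢ • B` over unit vectors,
and `x₁ < x₂`, then `re⟪χ₁, B χ₁⟫ ≤ re⟪χ₂, B χ₂⟫`. -/
theorem expectation_monotone_in_parameter
    {E : Type*} [NormedAddCommGroup E] [InnerProductSpace ℂ E]
    [FiniteDimensional ℂ E] [Nontrivial E]
    (A B : E →ₗ[ℂ] E) (hA : A.IsSymmetric) (hB : B.IsSymmetric)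
    (x₁ x₂ : ℝ) (hx : x₁ < x₂)
    (χ₁ χ₂ : E) (hχ₁ : ‖χ₁‖ = 1) (hχ₂ : ‖χ₂‖ = 1)
    (hmin₁ : ∀ v : E, ‖v‖ = 1 →
      (⟪χ₁, (A - (x₁ : ℂ) • B) χ₁⟫_ℂ).re ≤ (⟪v, (A - (x₁ : ℂ) • B) v⟫_ℂ).re)
    (hmin₂ : ∀ v : E, ‖v‖ = 1 →
      (⟪χ₂, (A - (x₂ : ℂ) • B) χ₂⟫_ℂ).re ≤ (⟪v, (A - (x₂ : ℂ) • B) v⟫_ℂ).re) :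
    (⟪χ₁, B χ₁⟫_ℂ).re ≤ (⟪χ₂, B χ₂⟫_ℂ).re :=
  expectation_monotone_in_parameter_general A B x₁ x₂ hx χ₁ χ₂ hχ₁ hχ₂ hmin₁ hmin₂
end

section
/- Let t > 0 and Ec ≥ 0 be real numbers, and let h, f : ℝ → ℝ be such that for every x in the open interval (−t, t), h has derivative f(x) at x, and f is monotone increasing on (−t, t). Let μ ∈ (−t, t) and let y be a real number with −t + 2·Ec·f(μ) < y < t + 2·Ec·f(μ). Then there exists a unique x ∈ (−t, t) such that x + 2·Ec·f(x) = y. -/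
/-!
For `c ≥ 0` and monotone `f`, the map `g x = x + c * f x` is strictly increasing, which gives
uniqueness. It is the derivative of `x ^ 2 / 2 + c * h x`, so by Darboux's theorem its image
of an interval is again an interval. The point `x₀ = y - c * f μ` lies in `(-t, t)` and
`g x₀ - y = c * (f x₀ - f μ)` has the same sign as `x₀ - μ = y - g μ`, so `y` lies between
`g x₀` and `g μ` and is therefore attained.
-/

open Set

section AddConstMul

variable {s : Set ℝ} {f : ℝ → ℝ} {c : ℝ}

theorem strictMonoOn_add_const_mul (hc : 0 ≤ c) (hf : MonotoneOn f s) :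
    StrictMonoOn (fun x => x + c * f x) s := fun a ha b hb hab => by
  have := mul_le_mul_of_nonneg_left (hf ha hb hab.le) hc
  dsimp only
  linarith

theorem mem_uIcc_add_const_mul (hc : 0 ≤ c) (hf : MonotoneOn f s) {μ y : ℝ} (hμ : μ ∈ s)
    (hx₀ : y - c * f μ ∈ s) :
    y ∈ uIcc ((y - c * f μ) + c * f (y - c * f μ)) (μ + c * f μ) := by
  rcases le_total (y - c * f μ) μ with hle | hle
  · have := mul_le_mul_of_nonneg_left (hf hx₀ hμ hle) hc
    exact mem_uIcc_of_le (by linarith) (by linarith)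
  · have := mul_le_mul_of_nonneg_left (hf hμ hx₀ hle) hc
    exact mem_uIcc_of_ge (by linarith) (by linarith)

theorem Set.OrdConnected.image_add_const_mul_of_hasDerivAt (hs : OrdConnected s) {h : ℝ → ℝ}
    (hh : ∀ x ∈ s, HasDerivAt h (f x) x) :
    OrdConnected ((fun x => x + c * f x) '' s) := by
  refine hs.image_hasDerivWithinAt (f := fun x => x ^ 2 / 2 + c * h x) fun x hx => ?_
  have hsq : HasDerivAt (fun x : ℝ => x ^ 2 / 2) x x := by
    simpa using (hasDerivAt_pow 2 x).div_const 2
  exact (hsq.add ((hh x hx).const_mul c)).hasDerivWithinAt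

end AddConstMul

theorem lemma1_unique_mu_prime_general
    (t Ec : ℝ) (hEc : 0 ≤ Ec)
    (h f : ℝ → ℝ)
    (hderiv : ∀ x ∈ Set.Ioo (-t) t, HasDerivAt h (f x) x)
    (hmono : ∀ x₁ ∈ Set.Ioo (-t) t, ∀ x₂ ∈ Set.Ioo (-t) t, x₁ ≤ x₂ → f x₁ ≤ f x₂)
    (μ : ℝ) (hμ : μ ∈ Set.Ioo (-t) t)
    (y : ℝ) (hy₁ : -t + 2 * Ec * f μ < y) (hy₂ : y < t + 2 * Ec * f μ) :
    ∃! x : ℝ, x ∈ Set.Ioo (-t) t ∧ x + 2 * Ec * f x = y := by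
  have hf : MonotoneOn f (Ioo (-t) t) := fun a ha b hb hab => hmono a ha b hb hab
  have hc : 0 ≤ 2 * Ec := by positivity
  have hx₀ : y - 2 * Ec * f μ ∈ Ioo (-t) t := ⟨by linarith, by linarith⟩
  have himage : OrdConnected ((fun x => x + 2 * Ec * f x) '' Ioo (-t) t) :=
    ordConnected_Ioo.image_add_const_mul_of_hasDerivAt hderiv
  obtain ⟨x, hx, hxy⟩ : y ∈ (fun x => x + 2 * Ec * f x) '' Ioo (-t) t :=
    himage.uIcc_subset (mem_image_of_mem _ hx₀) (mem_image_of_mem _ hμ)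
      (mem_uIcc_add_const_mul hc hf hμ hx₀)
  exact ⟨x, ⟨hx, hxy⟩, fun z ⟨hz, hzy⟩ =>
    (strictMonoOn_add_const_mul hc hf).injOn hz hx (hzy.trans hxy.symm)⟩

/-- Analytic core of Lemma 1: if `f` is a monotone increasing function on the
open interval `(−t, t)` which is the derivative of some function `h` there,
then for every `y` with `−t + 2·Ec·f(μ) < y < t + 2·Ec·f(μ)` (where
`μ ∈ (−t, t)`), there is a unique `x ∈ (−t, t)` with `x + 2·Ec·f(x) = y`. -/
theorem lemma1_unique_mu_prime
    (t Ec : ℝ) (ht : 0 < t) (hEc : 0 ≤ Ec)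
    (h f : ℝ → ℝ)
    (hderiv : ∀ x ∈ Set.Ioo (-t) t, HasDerivAt h (f x) x)
    (hmono : ∀ x₁ ∈ Set.Ioo (-t) t, ∀ x₂ ∈ Set.Ioo (-t) t, x₁ ≤ x₂ → f x₁ ≤ f x₂)
    (μ : ℝ) (hμ : μ ∈ Set.Ioo (-t) t)
    (y : ℝ) (hy₁ : -t + 2 * Ec * f μ < y) (hy₂ : y < t + 2 * Ec * f μ) :
    ∃! x : ℝ, x ∈ Set.Ioo (-t) t ∧ x + 2 * Ec * f x = y :=
  lemma1_unique_mu_prime_general t Ec hEc h f hderiv hmono μ hμ y hy₁ hy₂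
end

section
/- Let T and S be symmetric linear operators on E with V := T − S positive semidefinite. Let E0, E1, ε0, ε1 be real numbers and ψ, χ unit vectors in E such that: (i) T ψ = E0 • ψ and re⟪v, T v⟫ ≥ E0·‖v‖² for all v; (ii) E1 is the least element of the set {re⟪v, T v⟫ : ‖v‖ = 1 and ⟪ψ, v⟫ = 0}; (iii) S χ = ε0 • χ and re⟪v, S v⟫ ≥ ε0·‖v‖² for all v; (iv) re⟪v, S v⟫ ≥ ε1 for every unit vector v with ⟪χ, v⟫ = 0. Then E1 − E0 ≥ (ε1 − ε0) − re⟪χ, V χ⟫. -/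
open scoped InnerProductSpace

/-!
Let `v` be a unit vector orthogonal to `ψ` realising `E1`. On the plane spanned by the eigenvector
`ψ` and `v` the form of `T` is at most `E1 ‖φ‖²`, since the cross terms vanish and `E0 ≤ E1`.
That plane contains a nonzero `φ ⟂ χ`, for which `ε1 ‖φ‖² ≤ ⟪φ, S φ⟫ ≤ ⟪φ, T φ⟫ ≤ E1 ‖φ‖²`
because `T - S ≥ 0`; hence `ε1 ≤ E1`. Finally `E0 ≤ ⟪χ, T χ⟫ = ε0 + ⟪χ, (T - S) χ⟫`.
-/

section

variable {𝕜 E : Type*} [RCLike 𝕜] [NormedAddCommGroup E] [InnerProductSpace 𝕜 E]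

namespace LinearMap

theorem re_inner_smul_map_smul (T : E →ₗ[𝕜] E) (c : 𝕜) (x : E) :
    RCLike.re ⟪c • x, T (c • x)⟫_𝕜 = ‖c‖ ^ 2 * RCLike.re ⟪x, T x⟫_𝕜 := by
  rw [map_smul, inner_smul_left, inner_smul_right, ← mul_assoc, RCLike.conj_mul,
    ← RCLike.ofReal_pow, RCLike.re_ofReal_mul]

theorem re_inner_map_self_of_eq_smul_s5 {T : E →ₗ[𝕜] E} {μ : ℝ} {x : E} (hx : T x = (μ : 𝕜) • x) :
    RCLike.re ⟪x, T x⟫_𝕜 = μ * ‖x‖ ^ 2 := by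
  rw [hx, inner_smul_right, inner_self_eq_norm_sq_to_K, ← RCLike.ofReal_pow,
    ← RCLike.ofReal_mul, RCLike.ofReal_re]

theorem IsSymmetric.re_inner_map_add_of_eq_smul {T : E →ₗ[𝕜] E} (hT : T.IsSymmetric) {μ : ℝ}
    {x y : E} (hx : T x = (μ : 𝕜) • x) (hxy : ⟪x, y⟫_𝕜 = 0) :
    RCLike.re ⟪x + y, T (x + y)⟫_𝕜 = μ * ‖x‖ ^ 2 + RCLike.re ⟪y, T y⟫_𝕜 := by
  have hxTy : ⟪x, T y⟫_𝕜 = 0 := by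
    rw [← hT, hx, inner_smul_left, hxy, mul_zero]
  have hyTx : ⟪y, T x⟫_𝕜 = 0 := by
    rw [← hT, ← inner_conj_symm, hxTy, map_zero]
  rw [map_add, inner_add_left, inner_add_right, inner_add_right, hxTy, hyTx, add_zero, zero_add,
    map_add, re_inner_map_self_of_eq_smul_s5 hx]

theorem IsSymmetric.re_inner_map_le_of_mem_span_pair {T : E →ₗ[𝕜] E} (hT : T.IsSymmetric)
    {μ c : ℝ} {x y : E} (hx : T x = (μ : 𝕜) • x) (hxy : ⟪x, y⟫_𝕜 = 0) (hμ : μ ≤ c)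
    (hy : RCLike.re ⟪y, T y⟫_𝕜 ≤ c * ‖y‖ ^ 2) {w : E} (hw : w ∈ Submodule.span 𝕜 {x, y}) :
    RCLike.re ⟪w, T w⟫_𝕜 ≤ c * ‖w‖ ^ 2 := by
  obtain ⟨a, b, rfl⟩ := Submodule.mem_span_pair.mp hw
  have hax : T (a • x) = (μ : 𝕜) • a • x := by rw [map_smul, hx, smul_comm]
  have hperp : ⟪a • x, b • y⟫_𝕜 = 0 := by
    rw [inner_smul_left, inner_smul_right, hxy, mul_zero, mul_zero]
  have hpyth := norm_add_sq_eq_norm_sq_add_norm_sq_of_inner_eq_zero _ _ hperp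
  rw [norm_smul b y] at hpyth
  rw [hT.re_inner_map_add_of_eq_smul hax hperp, re_inner_smul_map_smul, sq ‖a • x + b • y‖, hpyth]
  nlinarith [mul_le_mul_of_nonneg_left hy (sq_nonneg ‖b‖), sq_nonneg ‖a • x‖]

theorem le_re_inner_map_of_forall_norm_eq_one (T : E →ₗ[𝕜] E) {K : Submodule 𝕜 E} {c : ℝ}
    (h : ∀ v ∈ K, ‖v‖ = 1 → c ≤ RCLike.re ⟪v, T v⟫_𝕜) {w : E} (hw : w ∈ K) :
    c * ‖w‖ ^ 2 ≤ RCLike.re ⟪w, T w⟫_𝕜 := by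
  rcases eq_or_ne w 0 with rfl | hw0
  · simp
  have hnorm : ‖w‖ ≠ 0 := norm_ne_zero_iff.mpr hw0
  set u : E := ((‖w‖⁻¹ : ℝ) : 𝕜) • w
  have hwu : w = ((‖w‖ : ℝ) : 𝕜) • u := by
    rw [smul_smul, ← RCLike.ofReal_mul, mul_inv_cancel₀ hnorm, RCLike.ofReal_one, one_smul]
  have hu : ‖u‖ = 1 := by
    rw [norm_smul, RCLike.norm_ofReal, abs_inv, abs_norm, inv_mul_cancel₀ hnorm]
  have hcu := h u (K.smul_mem _ hw) hu
  conv_rhs => rw [hwu, re_inner_smul_map_smul, RCLike.norm_ofReal, abs_norm]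
  rw [mul_comm c]
  exact mul_le_mul_of_nonneg_left hcu (sq_nonneg _)

end LinearMap

theorem exists_mem_span_pair_ne_zero_inner_eq_zero {x y : E} (hx : x ≠ 0) (hy : y ≠ 0)
    (hxy : ⟪x, y⟫_𝕜 = 0) (z : E) :
    ∃ w ∈ Submodule.span 𝕜 {x, y}, w ≠ 0 ∧ ⟪z, w⟫_𝕜 = 0 := by
  by_cases hzy : ⟪z, y⟫_𝕜 = 0
  · exact ⟨y, Submodule.subset_span (by simp), hy, hzy⟩
  refine ⟨⟪z, y⟫_𝕜 • x - ⟪z, x⟫_𝕜 • y,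
    Submodule.mem_span_pair.mpr ⟨⟪z, y⟫_𝕜, -⟪z, x⟫_𝕜, by rw [neg_smul, ← sub_eq_add_neg]⟩, ?_, ?_⟩
  · intro h0
    have hx0 := congrArg (⟪x, ·⟫_𝕜) h0
    simp only [inner_sub_right, inner_smul_right, hxy, mul_zero, sub_zero, inner_zero_right,
      mul_eq_zero, inner_self_eq_zero] at hx0
    tauto
  · rw [inner_sub_right, inner_smul_right, inner_smul_right, mul_comm, sub_self]

end

theorem gap_inequality_general
    {E : Type*} [NormedAddCommGroup E] [InnerProductSpace ℂ E]
    (T S : E →ₗ[ℂ] E) (hT : T.IsSymmetric)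
    (hV : ∀ v : E, 0 ≤ (⟪v, (T - S) v⟫_ℂ).re)
    (E0 E1 ε0 ε1 : ℝ) (ψ χ : E) (hψ : ‖ψ‖ = 1) (hχ : ‖χ‖ = 1)
    (hTψ : T ψ = (E0 : ℂ) • ψ)
    (hTgr : ∀ v : E, E0 * ‖v‖ ^ 2 ≤ (⟪v, T v⟫_ℂ).re)
    (hE1 : IsLeast {r : ℝ | ∃ v : E, ‖v‖ = 1 ∧ ⟪ψ, v⟫_ℂ = 0 ∧ r = (⟪v, T v⟫_ℂ).re} E1)
    (hSχ : S χ = (ε0 : ℂ) • χ)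
    (hSgap : ∀ v : E, ‖v‖ = 1 → ⟪χ, v⟫_ℂ = 0 → ε1 ≤ (⟪v, S v⟫_ℂ).re) :
    (ε1 - ε0) - (⟪χ, (T - S) χ⟫_ℂ).re ≤ E1 - E0 := by
  obtain ⟨⟨v, hv, hψv, rfl⟩, -⟩ := hE1
  have hV_apply (u : E) : (⟪u, (T - S) u⟫_ℂ).re = (⟪u, T u⟫_ℂ).re - (⟪u, S u⟫_ℂ).re := by
    rw [LinearMap.sub_apply, inner_sub_right, Complex.sub_re]
  obtain ⟨φ, hφ, hφ0, hχφ⟩ := exists_mem_span_pair_ne_zero_inner_eq_zero (𝕜 := ℂ)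
    (ne_zero_of_norm_ne_zero (by simp [hψ])) (ne_zero_of_norm_ne_zero (by simp [hv])) hψv χ
  have hφT := hT.re_inner_map_le_of_mem_span_pair hTψ hψv (by simpa [hv] using hTgr v)
    (le_of_eq (by simp [hv])) hφ
  have hφS := S.le_re_inner_map_of_forall_norm_eq_one (K := LinearMap.ker (innerₛₗ ℂ χ))
    (fun u hu hu1 => hSgap u hu1 hu) hχφ
  have hε1 : ε1 ≤ (⟪v, T v⟫_ℂ).re := by
    rw [RCLike.re_to_complex] at hφT hφS
    refine le_of_mul_le_mul_right ?_ (pow_pos (norm_pos_iff.mpr hφ0) 2)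
    linarith [hV φ, hV_apply φ]
  have hE0 : E0 ≤ ε0 + (⟪χ, (T - S) χ⟫_ℂ).re := by
    have hχT := hTgr χ
    have hχS := LinearMap.re_inner_map_self_of_eq_smul_s5 hSχ
    rw [hχ, one_pow, mul_one] at hχT hχS
    rw [RCLike.re_to_complex] at hχS
    rw [hV_apply]
    linarith
  linarith

/-- The gap inequality `δ ≥ δ₀ − ⟪χ, V χ⟫` (starting point of the proofs of
Theorems 1 and 3): the spectral gap `E1 − E0` of the perturbed Hamiltonian
`T = S + V` is at least the gap `ε1 − ε0` of `S` minus the expectation of the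
positive perturbation `V = T - S` in the ground state `χ` of `S`. -/
theorem gap_inequality
    {E : Type*} [NormedAddCommGroup E] [InnerProductSpace ℂ E]
    [FiniteDimensional ℂ E] [Nontrivial E]
    (T S : E →ₗ[ℂ] E) (hT : T.IsSymmetric) (hS : S.IsSymmetric)
    (hV : ∀ v : E, 0 ≤ (⟪v, (T - S) v⟫_ℂ).re)
    (E0 E1 ε0 ε1 : ℝ) (ψ χ : E) (hψ : ‖ψ‖ = 1) (hχ : ‖χ‖ = 1)
    (hTψ : T ψ = (E0 : ℂ) • ψ)
    (hTgr : ∀ v : E, E0 * ‖v‖ ^ 2 ≤ (⟪v, T v⟫_ℂ).re)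
    (hE1 : IsLeast {r : ℝ | ∃ v : E, ‖v‖ = 1 ∧ ⟪ψ, v⟫_ℂ = 0 ∧ r = (⟪v, T v⟫_ℂ).re} E1)
    (hSχ : S χ = (ε0 : ℂ) • χ)
    (hSgr : ∀ v : E, ε0 * ‖v‖ ^ 2 ≤ (⟪v, S v⟫_ℂ).re)
    (hSgap : ∀ v : E, ‖v‖ = 1 → ⟪χ, v⟫_ℂ = 0 → ε1 ≤ (⟪v, S v⟫_ℂ).re) :
    (ε1 - ε0) - (⟪χ, (T - S) χ⟫_ℂ).re ≤ E1 - E0 :=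
  gap_inequality_general T S hT hV E0 E1 ε0 ε1 ψ χ hψ hχ hTψ hTgr hE1 hSχ hSgap
end

section
/- Let Γ be a symmetric linear operator on E with ‖Γ v‖ ≤ ‖v‖ for every v ∈ E, and let χ, ψ be unit vectors with Γ χ = χ. Then re⟪ψ, Γ ψ⟫ ≥ 2·‖⟪χ, ψ⟫‖² − 1. -/
/-!
Let `c = ⟪χ, ψ⟫` and let `r = 2c χ - ψ` be the reflection of `ψ` in the line `ℂ χ`, so `‖r‖ = ‖ψ‖`.
Since `Γ` fixes `χ`, `Γ ψ = 2c χ - Γ r`, hence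
`re⟪ψ, Γ ψ⟫ = 2‖c‖² - re⟪ψ, Γ r⟫ ≥ 2‖c‖² - ‖ψ‖ ‖r‖ = 2‖c‖² - ‖ψ‖²`.
-/

open scoped InnerProductSpace
open RCLike Submodule

section

variable {𝕜 E : Type*} [RCLike 𝕜] [NormedAddCommGroup E] [InnerProductSpace 𝕜 E]

theorem add_reflection_span_singleton_of_norm_eq_one {v : E} (hv : ‖v‖ = 1) (w : E) :
    w + reflection (𝕜 ∙ v) w = (2 * ⟪v, w⟫_𝕜) • v := by
  rw [reflection_apply, starProjection_unit_singleton 𝕜 hv, add_sub_cancel, mul_smul,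
    two_smul, two_smul]

theorem two_mul_norm_inner_sq_sub_norm_sq_le_re_inner_apply (Γ : E →ₗ[𝕜] E)
    (hcontr : ∀ v, ‖Γ v‖ ≤ ‖v‖) {χ : E} (hχ : ‖χ‖ = 1) (hfix : Γ χ = χ) (ψ : E) :
    2 * ‖⟪χ, ψ⟫_𝕜‖ ^ 2 - ‖ψ‖ ^ 2 ≤ re ⟪ψ, Γ ψ⟫_𝕜 := by
  set r := reflection (𝕜 ∙ χ) ψ
  have hΓψ : Γ ψ = (2 * ⟪χ, ψ⟫_𝕜) • χ - Γ r := by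
    rw [eq_sub_iff_add_eq, ← map_add, add_reflection_span_singleton_of_norm_eq_one hχ,
      map_smul, hfix]
  have hcross : re ⟪ψ, (2 * ⟪χ, ψ⟫_𝕜) • χ⟫_𝕜 = 2 * ‖⟪χ, ψ⟫_𝕜‖ ^ 2 := by
    rw [inner_smul_right, ← inner_conj_symm, mul_assoc, RCLike.conj_mul]
    norm_cast
    rw [RCLike.norm_conj]
  calc 2 * ‖⟪χ, ψ⟫_𝕜‖ ^ 2 - ‖ψ‖ ^ 2 = re ⟪ψ, (2 * ⟪χ, ψ⟫_𝕜) • χ⟫_𝕜 - ‖ψ‖ * ‖r‖ := by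
        rw [hcross, LinearIsometryEquiv.norm_map]; ring
    _ ≤ re ⟪ψ, (2 * ⟪χ, ψ⟫_𝕜) • χ⟫_𝕜 - re ⟪ψ, Γ r⟫_𝕜 := by
        gcongr
        exact (re_inner_le_norm ψ (Γ r)).trans (by gcongr; exact hcontr r)
    _ = re ⟪ψ, Γ ψ⟫_𝕜 := by rw [hΓψ, inner_sub_right, map_sub]

end

theorem contraction_expectation_lower_bound_general
    {E : Type*} [NormedAddCommGroup E] [InnerProductSpace ℂ E]
    (Γ : E →ₗ[ℂ] E)
    (hcontr : ∀ v : E, ‖Γ v‖ ≤ ‖v‖)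
    (χ ψ : E) (hχ : ‖χ‖ = 1) (hψ : ‖ψ‖ = 1)
    (hfix : Γ χ = χ) :
    2 * ‖⟪χ, ψ⟫_ℂ‖ ^ 2 - 1 ≤ (⟪ψ, Γ ψ⟫_ℂ).re := by
  simpa [hψ] using two_mul_norm_inner_sq_sub_norm_sq_le_re_inner_apply Γ hcontr hχ hfix ψ

/-- Core step of Theorems 2 and 4: if the symmetric contraction `Γ` fixes the
unit vector `χ`, then its expectation in any unit vector `ψ` is bounded below
by `2‖⟪χ, ψ⟫‖² − 1`. -/
theorem contraction_expectation_lower_bound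
    {E : Type*} [NormedAddCommGroup E] [InnerProductSpace ℂ E]
    [FiniteDimensional ℂ E] [Nontrivial E]
    (Γ : E →ₗ[ℂ] E) (hΓ : Γ.IsSymmetric)
    (hcontr : ∀ v : E, ‖Γ v‖ ≤ ‖v‖)
    (χ ψ : E) (hχ : ‖χ‖ = 1) (hψ : ‖ψ‖ = 1)
    (hfix : Γ χ = χ) :
    2 * ‖⟪χ, ψ⟫_ℂ‖ ^ 2 - 1 ≤ (⟪ψ, Γ ψ⟫_ℂ).re :=
  contraction_expectation_lower_bound_general Γ hcontr χ ψ hχ hψ hfix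
end

section
/- Let T and S be symmetric linear operators on E with V := T − S positive semidefinite, and let Γ be a symmetric linear operator on E with ‖Γ v‖ ≤ ‖v‖ for every v. Let E0, E1, ε0, ε1, V_U be real numbers and ψ, χ unit vectors such that: (i) T ψ = E0 • ψ and re⟪v, T v⟫ ≥ E0·‖v‖² for all v; (ii) E1 is the least element of the set {re⟪v, T v⟫ : ‖v‖ = 1 and ⟪ψ, v⟫ = 0}, and E1 > E0; (iii) S χ = ε0 • χ and re⟪v, S v⟫ ≥ ε0·‖v‖² for all v; (iv) re⟪v, S v⟫ ≥ ε1 for every unit vector v with ⟪χ, v⟫ = 0, and ε1 > ε0; (v) re⟪χ, V χ⟫ ≤ V_U; (vi) Γ χ = χ. Then re⟪ψ, Γ ψ⟫ ≥ 1 − 2·V_U/(ε1 − ε0). -/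
open scoped InnerProductSpace

/-!
Write `ψ = c • χ + w` with `c = ⟪χ, ψ⟫` and `w ⊥ χ`. Since `χ` is an eigenvector of the symmetric
operators `S` and `Γ`, both quadratic forms split along this decomposition. For `S` the gap gives
`⟪ψ, S ψ⟫ ≥ ε0 + (ε1 - ε0) ‖w‖²`, while `V ≥ 0` and the variational principle for `T` give
`⟪ψ, S ψ⟫ ≤ ⟪ψ, T ψ⟫ = E0 ≤ ⟪χ, T χ⟫ ≤ ε0 + V_U`; hence `‖w‖² ≤ V_U / (ε1 - ε0)`.
For the contraction `Γ` fixing `χ`, `⟪ψ, Γ ψ⟫ = |c|² + ⟪w, Γ w⟫ ≥ |c|² - ‖w‖² = 1 - 2 ‖w‖²`.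
-/

open RCLike

section

variable {𝕜 E : Type*} [RCLike 𝕜] [NormedAddCommGroup E] [InnerProductSpace 𝕜 E]

theorem norm_inner_sq_add_norm_sub_inner_smul_sq {χ : E} (hχ : ‖χ‖ = 1) (ψ : E) :
    ‖⟪χ, ψ⟫_𝕜‖ ^ 2 + ‖ψ - ⟪χ, ψ⟫_𝕜 • χ‖ ^ 2 = ‖ψ‖ ^ 2 := by
  have horth : ⟪⟪χ, ψ⟫_𝕜 • χ, ψ - ⟪χ, ψ⟫_𝕜 • χ⟫_𝕜 = 0 := by
    rw [inner_smul_left, inner_sub_inner_smul_eq_zero hχ, mul_zero]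
  have h := norm_add_sq_eq_norm_sq_add_norm_sq_of_inner_eq_zero _ _ horth
  rw [add_sub_cancel, norm_smul, hχ, mul_one] at h
  rw [sq, sq, sq, h]

theorem re_inner_map_self_of_eigen {A : E →ₗ[𝕜] E} {μ : ℝ} {x : E} (hx : A x = (μ : 𝕜) • x) :
    re ⟪x, A x⟫_𝕜 = μ * ‖x‖ ^ 2 := by
  rw [hx, inner_smul_right, inner_self_eq_norm_sq_to_K]
  norm_cast

theorem neg_norm_sq_le_re_inner_of_norm_le {x y : E} (h : ‖y‖ ≤ ‖x‖) :
    -‖x‖ ^ 2 ≤ re ⟪x, y⟫_𝕜 := by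
  have hre : -re ⟪x, y⟫_𝕜 ≤ ‖x‖ * ‖y‖ := by
    simpa [inner_neg_right] using re_inner_le_norm (𝕜 := 𝕜) x (-y)
  nlinarith [norm_nonneg x]

theorem mul_norm_sq_le_re_inner_map_self {A : E →ₗ[𝕜] E} {χ : E} {ε : ℝ}
    (h : ∀ v : E, ‖v‖ = 1 → ⟪χ, v⟫_𝕜 = 0 → ε ≤ re ⟪v, A v⟫_𝕜) {w : E} (hw : ⟪χ, w⟫_𝕜 = 0) :
    ε * ‖w‖ ^ 2 ≤ re ⟪w, A w⟫_𝕜 := by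
  rcases eq_or_ne w 0 with rfl | hw0
  · simp
  have hpos : 0 < ‖w‖ := norm_pos_iff.mpr hw0
  have hunit : ‖((‖w‖⁻¹ : ℝ) : 𝕜) • w‖ = 1 := by
    rw [norm_smul, norm_ofReal, abs_inv, abs_norm, inv_mul_cancel₀ hpos.ne']
  have hrescale := h _ hunit (by rw [inner_smul_right, hw, mul_zero])
  rw [map_smul, inner_smul_left, inner_smul_right, conj_ofReal, ← mul_assoc, ← ofReal_mul,
    re_ofReal_mul] at hrescale
  calc ε * ‖w‖ ^ 2 ≤ ‖w‖⁻¹ * ‖w‖⁻¹ * re ⟪w, A w⟫_𝕜 * ‖w‖ ^ 2 := by gcongr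
    _ = re ⟪w, A w⟫_𝕜 := by field_simp

namespace LinearMap.IsSymmetric

variable {A : E →ₗ[𝕜] E}

theorem inner_map_add_self_of_eigen (hA : A.IsSymmetric) {μ : 𝕜} {x y : E}
    (hx : A x = μ • x) (hxy : ⟪x, y⟫_𝕜 = 0) :
    ⟪x + y, A (x + y)⟫_𝕜 = ⟪x, A x⟫_𝕜 + ⟪y, A y⟫_𝕜 := by
  have hxAy : ⟪x, A y⟫_𝕜 = 0 := by rw [← hA, hx, inner_smul_left, hxy, mul_zero]
  have hyAx : ⟪y, A x⟫_𝕜 = 0 := by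
    rw [hx, inner_smul_right, inner_eq_zero_symm.mp hxy, mul_zero]
  rw [map_add, inner_add_left, inner_add_right, inner_add_right, hxAy, hyAx]
  ring

theorem re_inner_map_self_eq_of_eigen (hA : A.IsSymmetric) {μ : ℝ} {χ : E} (hχ : ‖χ‖ = 1)
    (hAχ : A χ = (μ : 𝕜) • χ) (ψ : E) :
    re ⟪ψ, A ψ⟫_𝕜 =
      μ * ‖⟪χ, ψ⟫_𝕜‖ ^ 2 + re ⟪ψ - ⟪χ, ψ⟫_𝕜 • χ, A (ψ - ⟪χ, ψ⟫_𝕜 • χ)⟫_𝕜 := by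
  have hAx : A (⟪χ, ψ⟫_𝕜 • χ) = (μ : 𝕜) • ⟪χ, ψ⟫_𝕜 • χ := by rw [map_smul, hAχ, smul_comm]
  have horth : ⟪⟪χ, ψ⟫_𝕜 • χ, ψ - ⟪χ, ψ⟫_𝕜 • χ⟫_𝕜 = 0 := by
    rw [inner_smul_left, inner_sub_inner_smul_eq_zero hχ, mul_zero]
  conv_lhs => rw [← add_sub_cancel (⟪χ, ψ⟫_𝕜 • χ) ψ]
  rw [hA.inner_map_add_self_of_eigen hAx horth, map_add, re_inner_map_self_of_eigen hAx,
    norm_smul, hχ, mul_one]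

theorem norm_sub_inner_smul_sq_le (hA : A.IsSymmetric) {χ ψ : E} (hχ : ‖χ‖ = 1) (hψ : ‖ψ‖ = 1)
    {ε0 ε1 δ : ℝ} (hAχ : A χ = (ε0 : 𝕜) • χ)
    (hgap : ∀ v : E, ‖v‖ = 1 → ⟪χ, v⟫_𝕜 = 0 → ε1 ≤ re ⟪v, A v⟫_𝕜)
    (henergy : re ⟪ψ, A ψ⟫_𝕜 ≤ ε0 + δ) :
    (ε1 - ε0) * ‖ψ - ⟪χ, ψ⟫_𝕜 • χ‖ ^ 2 ≤ δ := by
  have hsplit := hA.re_inner_map_self_eq_of_eigen hχ hAχ ψ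
  have hw := mul_norm_sq_le_re_inner_map_self hgap (inner_sub_inner_smul_eq_zero hχ ψ)
  have hpyth := norm_inner_sq_add_norm_sub_inner_smul_sq (𝕜 := 𝕜) hχ ψ
  rw [hψ, one_pow] at hpyth
  linear_combination hw + henergy - hsplit - ε0 * hpyth

theorem one_sub_two_mul_norm_sub_inner_smul_sq_le (hA : A.IsSymmetric)
    (hcontr : ∀ v : E, ‖A v‖ ≤ ‖v‖) {χ ψ : E} (hχ : ‖χ‖ = 1) (hψ : ‖ψ‖ = 1) (hfix : A χ = χ) :
    1 - 2 * ‖ψ - ⟪χ, ψ⟫_𝕜 • χ‖ ^ 2 ≤ re ⟪ψ, A ψ⟫_𝕜 := by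
  have hsplit := hA.re_inner_map_self_eq_of_eigen (μ := 1) hχ (by rw [ofReal_one, one_smul, hfix]) ψ
  have hw := neg_norm_sq_le_re_inner_of_norm_le (𝕜 := 𝕜) (hcontr (ψ - ⟪χ, ψ⟫_𝕜 • χ))
  have hpyth := norm_inner_sq_add_norm_sub_inner_smul_sq (𝕜 := 𝕜) hχ ψ
  rw [hψ, one_pow] at hpyth
  linarith

end LinearMap.IsSymmetric

end

theorem theorem4_abstract_general
    {E : Type*} [NormedAddCommGroup E] [InnerProductSpace ℂ E]
    (T S Γ : E →ₗ[ℂ] E) (hS : S.IsSymmetric)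
    (hΓ : Γ.IsSymmetric) (hcontr : ∀ v : E, ‖Γ v‖ ≤ ‖v‖)
    (hV : ∀ v : E, 0 ≤ (⟪v, (T - S) v⟫_ℂ).re)
    (E0 ε0 ε1 VU : ℝ) (ψ χ : E) (hψ : ‖ψ‖ = 1) (hχ : ‖χ‖ = 1)
    (hTψ : T ψ = (E0 : ℂ) • ψ)
    (hTgr : ∀ v : E, E0 * ‖v‖ ^ 2 ≤ (⟪v, T v⟫_ℂ).re)
    (hSχ : S χ = (ε0 : ℂ) • χ)
    (hSgap : ∀ v : E, ‖v‖ = 1 → ⟪χ, v⟫_ℂ = 0 → ε1 ≤ (⟪v, S v⟫_ℂ).re)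
    (hgapS : ε0 < ε1)
    (hVU : (⟪χ, (T - S) χ⟫_ℂ).re ≤ VU)
    (hfix : Γ χ = χ) :
    1 - 2 * VU / (ε1 - ε0) ≤ (⟪ψ, Γ ψ⟫_ℂ).re := by
  have hsub (v : E) : (⟪v, (T - S) v⟫_ℂ).re = (⟪v, T v⟫_ℂ).re - (⟪v, S v⟫_ℂ).re := by
    rw [LinearMap.sub_apply, inner_sub_right, Complex.sub_re]
  have hψT : (⟪ψ, T ψ⟫_ℂ).re = E0 := by
    simpa [hψ] using re_inner_map_self_of_eigen hTψ
  have hχS : (⟪χ, S χ⟫_ℂ).re = ε0 := by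
    simpa [hχ] using re_inner_map_self_of_eigen hSχ
  have hE0 : E0 ≤ ε0 + VU := by
    have hχT := hTgr χ
    rw [hχ, one_pow, mul_one] at hχT
    linarith [hsub χ]
  have henergy : (⟪ψ, S ψ⟫_ℂ).re ≤ ε0 + VU := by linarith [hV ψ, hsub ψ]
  have hw := hS.norm_sub_inner_smul_sq_le hχ hψ hSχ hSgap henergy
  have hΓψ := hΓ.one_sub_two_mul_norm_sub_inner_smul_sq_le hcontr hχ hψ hfix
  have hw' : ‖ψ - ⟪χ, ψ⟫_ℂ • χ‖ ^ 2 ≤ VU / (ε1 - ε0) := by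
    rw [le_div_iff₀ (sub_pos.mpr hgapS)]
    linarith
  rw [mul_div_assoc, ← RCLike.re_to_complex]
  linarith

/-- Abstract content of Theorem 4: the Majorana-like correlation function
`⟨ψ| Γ |ψ⟩` in the ground state `ψ` of the perturbed Hamiltonian `T = S + V`
is at least `1 − 2·V_U/(ε1 − ε0)`, where `ε1 − ε0` is the gap of `S` and
`V_U` is an upper bound on `⟪χ, V χ⟫` in the ground state `χ` of `S`, which
the symmetric contraction `Γ` fixes. -/
theorem theorem4_abstract
    {E : Type*} [NormedAddCommGroup E] [InnerProductSpace ℂ E]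
    [FiniteDimensional ℂ E] [Nontrivial E]
    (T S Γ : E →ₗ[ℂ] E) (hT : T.IsSymmetric) (hS : S.IsSymmetric)
    (hΓ : Γ.IsSymmetric) (hcontr : ∀ v : E, ‖Γ v‖ ≤ ‖v‖)
    (hV : ∀ v : E, 0 ≤ (⟪v, (T - S) v⟫_ℂ).re)
    (E0 E1 ε0 ε1 VU : ℝ) (ψ χ : E) (hψ : ‖ψ‖ = 1) (hχ : ‖χ‖ = 1)
    (hTψ : T ψ = (E0 : ℂ) • ψ)
    (hTgr : ∀ v : E, E0 * ‖v‖ ^ 2 ≤ (⟪v, T v⟫_ℂ).re)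
    (hE1 : IsLeast {r : ℝ | ∃ v : E, ‖v‖ = 1 ∧ ⟪ψ, v⟫_ℂ = 0 ∧ r = (⟪v, T v⟫_ℂ).re} E1)
    (hgapT : E0 < E1)
    (hSχ : S χ = (ε0 : ℂ) • χ)
    (hSgr : ∀ v : E, ε0 * ‖v‖ ^ 2 ≤ (⟪v, S v⟫_ℂ).re)
    (hSgap : ∀ v : E, ‖v‖ = 1 → ⟪χ, v⟫_ℂ = 0 → ε1 ≤ (⟪v, S v⟫_ℂ).re)
    (hgapS : ε0 < ε1)
    (hVU : (⟪χ, (T - S) χ⟫_ℂ).re ≤ VU)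
    (hfix : Γ χ = χ) :
    1 - 2 * VU / (ε1 - ε0) ≤ (⟪ψ, Γ ψ⟫_ℂ).re :=
  theorem4_abstract_general T S Γ hS hΓ hcontr hV E0 ε0 ε1 VU ψ χ hψ hχ hTψ hTgr hSχ hSgap hgapS hVU
    hfix
end

section
/- Let L be a positive natural number. For j : Fin L, let X j be the real matrix indexed by (Fin L → Bool) with entries (X j) f g = 1 if g = Function.update f j (!(f j)) and 0 otherwise, and let A = ∑ j, X j. Then for every real τ and every c : Fin L → Bool: (exp(τ • A)) c c = (cosh τ)^L, and (exp(τ • A)) c (fun i => !(c i)) = (sinh τ)^L. -/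
/-! Each flip matrix `X j` is the Kronecker product with `σˣ` at site `j` and identities elsewhere.
The `X j` commute and square to one, so `exp (τ • X j) = cosh τ • 1 + sinh τ • X j`, which is
again such a Kronecker product, with `exp (τ • σˣ) = cosh τ • 1 + sinh τ • σˣ` at site `j`.
Multiplying over `j`, `exp (τ • A)` is the Kronecker power of that `2 × 2` matrix, so each entry
is a product over sites of `cosh τ` (spin kept) or `sinh τ` (spin flipped). -/

open Matrix Finset

section Involution

variable {𝔸 : Type*} [Ring 𝔸] [Algebra ℝ 𝔸] [TopologicalSpace 𝔸] [IsTopologicalRing 𝔸]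
  [ContinuousSMul ℝ 𝔸] [T2Space 𝔸]

theorem exp_smul_of_mul_self_eq_one {x : 𝔸} (hx : x * x = 1) (τ : ℝ) :
    NormedSpace.exp (τ • x) = Real.cosh τ • 1 + Real.sinh τ • x := by
  have hpow : ∀ k : ℕ, x ^ (2 * k) = 1 := fun k => by rw [pow_mul, sq, hx, one_pow]
  set a : ℕ → 𝔸 := fun n => (n.factorial⁻¹ : ℝ) • (τ • x) ^ n
  have heven : HasSum (fun k => a (2 * k)) (Real.cosh τ • 1) := by
    convert (Real.hasSum_cosh τ).smul_const (1 : 𝔸) using 2 with k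
    simp only [a]
    rw [smul_pow, hpow, smul_smul, div_eq_inv_mul]
  have hodd : HasSum (fun k => a (2 * k + 1)) (Real.sinh τ • x) := by
    convert (Real.hasSum_sinh τ).smul_const x using 2 with k
    simp only [a]
    rw [smul_pow, pow_succ x, hpow, one_mul, smul_smul, div_eq_inv_mul]
  rw [NormedSpace.exp_eq_tsum ℝ]
  exact (heven.even_add_odd hodd).tsum_eq

end Involution

section PiKronecker

variable {ι κ R : Type*} [Fintype ι] [DecidableEq ι] [Fintype κ] [DecidableEq κ] [CommSemiring R]

def Matrix.piKronecker : (ι → Matrix κ κ R) →* Matrix (ι → κ) (ι → κ) R where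
  toFun B := of fun f g => ∏ i, B i (f i) (g i)
  map_one' := by
    ext f g
    simp [one_apply, Fintype.prod_boole, funext_iff]
  map_mul' B C := by
    ext f g
    simp only [of_apply, Pi.mul_apply, mul_apply, prod_univ_sum, Fintype.piFinset_univ,
      prod_mul_distrib]

theorem Matrix.piKronecker_apply (B : ι → Matrix κ κ R) (f g : ι → κ) :
    piKronecker B f g = ∏ i, B i (f i) (g i) := rfl

theorem Matrix.piKronecker_mulSingle_apply (a : ι) (C : Matrix κ κ R) (f g : ι → κ) :
    piKronecker (Pi.mulSingle a C) f g = C (f a) (g a) * if ∀ i ≠ a, f i = g i then 1 else 0 := by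
  have hrest : ∀ i ∈ ({a}ᶜ : Finset ι),
      (Pi.mulSingle a C : ι → Matrix κ κ R) i (f i) (g i) = if f i = g i then 1 else 0 :=
    fun i hi => by rw [Pi.mulSingle_eq_of_ne (by simpa using hi), one_apply]
  rw [piKronecker_apply, Fintype.prod_eq_mul_prod_compl a, Pi.mulSingle_eq_same,
    prod_congr rfl hrest, prod_boole]
  simp

theorem Matrix.piKronecker_mulSingle_add (a : ι) (C D : Matrix κ κ R) :
    piKronecker (Pi.mulSingle a (C + D)) =
      piKronecker (Pi.mulSingle a C) + piKronecker (Pi.mulSingle a D) := by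
  ext f g
  simp only [piKronecker_mulSingle_apply, add_apply, add_mul]

theorem Matrix.piKronecker_mulSingle_smul (a : ι) (r : R) (C : Matrix κ κ R) :
    piKronecker (Pi.mulSingle a (r • C)) = r • piKronecker (Pi.mulSingle a C) := by
  ext f g
  simp only [piKronecker_mulSingle_apply, smul_apply, smul_eq_mul, mul_assoc]

end PiKronecker

def pauliX (R : Type*) [Zero R] [One R] : Matrix Bool Bool R :=
  of fun x y => if y = !x then 1 else 0

theorem pauliX_mul_self (R : Type*) [Semiring R] : pauliX R * pauliX R = 1 := by
  ext x y
  cases x <;> cases y <;> simp [pauliX, mul_apply]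

section SpinFlip

variable {ι R : Type*} [Fintype ι] [DecidableEq ι] [CommSemiring R]

variable (R) in
def spinFlip (j : ι) : Matrix (ι → Bool) (ι → Bool) R := piKronecker (Pi.mulSingle j (pauliX R))

theorem spinFlip_apply (j : ι) (f g : ι → Bool) :
    spinFlip R j f g = if g = Function.update f j (!f j) then 1 else 0 := by
  simp only [spinFlip, piKronecker_mulSingle_apply, Function.eq_update_iff, pauliX, of_apply,
    ite_zero_mul_ite_zero, one_mul]
  congr! 4 with i
  exact eq_comm

theorem spinFlip_mul_self (j : ι) : spinFlip R j * spinFlip R j = 1 := by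
  rw [spinFlip, ← map_mul, ← Pi.mulSingle_mul, pauliX_mul_self, Pi.mulSingle_one, map_one]

theorem spinFlip_commute (j k : ι) : Commute (spinFlip R j) (spinFlip R k) := by
  obtain rfl | hjk := eq_or_ne j k
  · exact Commute.refl _
  · exact (Pi.mulSingle_commute hjk _ _).map piKronecker

theorem exp_smul_spinFlip (τ : ℝ) (j : ι) :
    NormedSpace.exp (τ • spinFlip ℝ j) =
      piKronecker (Pi.mulSingle j (NormedSpace.exp (τ • pauliX ℝ))) := by
  rw [exp_smul_of_mul_self_eq_one (spinFlip_mul_self j),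
    exp_smul_of_mul_self_eq_one (pauliX_mul_self ℝ), piKronecker_mulSingle_add,
    piKronecker_mulSingle_smul, piKronecker_mulSingle_smul, Pi.mulSingle_one, map_one, spinFlip]

theorem exp_smul_sum_spinFlip (τ : ℝ) :
    NormedSpace.exp (τ • ∑ j, spinFlip ℝ j) =
      piKronecker (fun _ : ι => NormedSpace.exp (τ • pauliX ℝ)) := by
  have hexp := Matrix.exp_sum_of_commute (univ : Finset ι) (fun j => τ • spinFlip ℝ j)
    (fun j _ k _ _ => ((spinFlip_commute j k).smul_left τ).smul_right τ)
  rw [smul_sum, hexp]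
  simp_rw [exp_smul_spinFlip]
  rw [← noncommProd_mulSingle (fun _ : ι => NormedSpace.exp (τ • pauliX ℝ))]
  exact (map_noncommProd _ _ _ (piKronecker : (ι → Matrix Bool Bool ℝ) →* _)).symm

end SpinFlip

theorem exp_smul_pauliX_apply (τ : ℝ) (x y : Bool) :
    NormedSpace.exp (τ • pauliX ℝ) x y = if y = x then Real.cosh τ else Real.sinh τ := by
  rw [exp_smul_of_mul_self_eq_one (pauliX_mul_self ℝ)]
  cases x <;> cases y <;> simp [pauliX]

theorem exp_sum_spin_flip_entries_general
    (L : ℕ)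
    (X : Fin L → Matrix (Fin L → Bool) (Fin L → Bool) ℝ)
    (hX : ∀ (j : Fin L) (f g : Fin L → Bool),
      X j f g = if g = Function.update f j (!(f j)) then 1 else 0)
    (A : Matrix (Fin L → Bool) (Fin L → Bool) ℝ) (hA : A = ∑ j, X j)
    (τ : ℝ) (c : Fin L → Bool) :
    NormedSpace.exp (τ • A) c c = (Real.cosh τ) ^ L ∧
      NormedSpace.exp (τ • A) c (fun i => !(c i)) = (Real.sinh τ) ^ L := by
  have hX' : X = spinFlip ℝ := funext fun j => ext fun f g => by rw [hX, spinFlip_apply]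
  subst hX' hA
  simp [exp_smul_sum_spinFlip, piKronecker_apply, exp_smul_pauliX_apply]

/-- Generating functions on the Jordan–Wigner spin chain at `t = Δ`, `μ = 0`:
with `X j` the spin-flip (Pauli `σ^x_j`) matrix and `A = ∑ j, X j`, the
diagonal entries of `exp (τ • A)` equal `(cosh τ)^L` and the entries between a
configuration and its global flip equal `(sinh τ)^L`. -/
theorem exp_sum_spin_flip_entries
    (L : ℕ) (hL : 0 < L)
    (X : Fin L → Matrix (Fin L → Bool) (Fin L → Bool) ℝ)
    (hX : ∀ (j : Fin L) (f g : Fin L → Bool),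
      X j f g = if g = Function.update f j (!(f j)) then 1 else 0)
    (A : Matrix (Fin L → Bool) (Fin L → Bool) ℝ) (hA : A = ∑ j, X j)
    (τ : ℝ) (c : Fin L → Bool) :
    NormedSpace.exp (τ • A) c c = (Real.cosh τ) ^ L ∧
      NormedSpace.exp (τ • A) c (fun i => !(c i)) = (Real.sinh τ) ^ L :=
  exp_sum_spin_flip_entries_general L X hX A hA τ c
end

section
/- Let m be a natural number and λ : Fin m → ℝ. Define G : ℝ → ℝ by G(τ) = ∑_α log((1 + exp(2τ)·(λ α)²)/(1 + (λ α)²)). Then the second derivative of G at 0 equals ∑_α 4·(λ α)²/(1 + (λ α)²)², and this quantity is at most m. -/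
/-!
Each summand of `G` is the cumulant generating function of `2X` for a Bernoulli variable `X`
with success probability `p = λ²/(1 + λ²)`, so its second derivative at `0` is
`Var(2X) = 4p(1 - p) ≤ 1`.
-/

open Real Finset

lemma hasDerivAt_exp_two_mul (τ : ℝ) :
    HasDerivAt (fun t => exp (2 * t)) (2 * exp (2 * τ)) τ := by
  simpa [mul_comm] using ((hasDerivAt_id τ).const_mul (2 : ℝ)).exp

lemma hasDerivAt_log_one_add_exp_two_mul_div {c : ℝ} (hc : 0 ≤ c) (τ : ℝ) :
    HasDerivAt (fun t => log ((1 + exp (2 * t) * c) / (1 + c)))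
      (2 * exp (2 * τ) * c / (1 + exp (2 * τ) * c)) τ := by
  have hlog : HasDerivAt (fun t => log (1 + exp (2 * t) * c))
      (2 * exp (2 * τ) * c / (1 + exp (2 * τ) * c)) τ :=
    ((hasDerivAt_exp_two_mul τ).mul_const c).const_add 1 |>.log (by positivity)
  have hsplit : (fun t => log ((1 + exp (2 * t) * c) / (1 + c))) =
      fun t => log (1 + exp (2 * t) * c) - log (1 + c) :=
    funext fun t => log_div (by positivity) (by positivity)
  simpa only [hsplit] using hlog.sub_const (log (1 + c))

lemma hasDerivAt_two_mul_exp_two_mul_div {c : ℝ} (hc : 0 ≤ c) (τ : ℝ) :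
    HasDerivAt (fun t => 2 * exp (2 * t) * c / (1 + exp (2 * t) * c))
      (4 * exp (2 * τ) * c / (1 + exp (2 * τ) * c) ^ 2) τ := by
  have hden : 1 + exp (2 * τ) * c ≠ 0 := by positivity
  refine (((hasDerivAt_exp_two_mul τ).const_mul 2).mul_const c).div
    (((hasDerivAt_exp_two_mul τ).mul_const c).const_add 1) hden |>.congr_deriv ?_
  field_simp
  ring

lemma iteratedDeriv_two_eq_of_hasDerivAt {f f' : ℝ → ℝ} {x a : ℝ}
    (hf : ∀ t, HasDerivAt f (f' t) t) (hf' : HasDerivAt f' a x) :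
    iteratedDeriv 2 f x = a := by
  rw [iteratedDeriv_succ, iteratedDeriv_one, funext fun t => (hf t).deriv, hf'.deriv]

lemma four_mul_div_one_add_sq_le_one (c : ℝ) : 4 * c / (1 + c) ^ 2 ≤ 1 :=
  div_le_one_of_le₀ (by nlinarith [sq_nonneg (1 - c)]) (sq_nonneg _)

/-- Even-parity particle-number variance bound for a BCS ground state: the
second derivative at `0` of
`G(τ) = ∑_α log((1 + e^{2τ}·λ_α²)/(1 + λ_α²))` equals
`∑_α 4·λ_α²/(1 + λ_α²)²`, which is at most `m`. -/
theorem even_parity_variance_bound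
    (m : ℕ) (l : Fin m → ℝ)
    (G : ℝ → ℝ)
    (hG : ∀ τ : ℝ, G τ =
      ∑ α, Real.log ((1 + Real.exp (2 * τ) * (l α) ^ 2) / (1 + (l α) ^ 2))) :
    iteratedDeriv 2 G 0 = ∑ α, 4 * (l α) ^ 2 / (1 + (l α) ^ 2) ^ 2 ∧
      (∑ α, 4 * (l α) ^ 2 / (1 + (l α) ^ 2) ^ 2) ≤ (m : ℝ) := by
  have hG' : ∀ τ, HasDerivAt G
      (∑ α, 2 * exp (2 * τ) * l α ^ 2 / (1 + exp (2 * τ) * l α ^ 2)) τ := fun τ => by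
    rw [funext hG]
    exact HasDerivAt.fun_sum fun α _ =>
      hasDerivAt_log_one_add_exp_two_mul_div (sq_nonneg (l α)) τ
  have hG'' := HasDerivAt.fun_sum fun α (_ : α ∈ univ) =>
    hasDerivAt_two_mul_exp_two_mul_div (sq_nonneg (l α)) 0
  refine ⟨by simpa using iteratedDeriv_two_eq_of_hasDerivAt hG' hG'', ?_⟩
  calc ∑ α, 4 * l α ^ 2 / (1 + l α ^ 2) ^ 2
      ≤ ∑ _α : Fin m, (1 : ℝ) := sum_le_sum fun α _ => four_mul_div_one_add_sq_le_one _
    _ = m := by simp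
end

section
/- Let m be a natural number and λ, w : Fin m → ℝ with w α ≥ 0 for all α and ∑_α (w α)/(1 + (λ α)²) = 1. Define Q : ℝ → ℝ by Q(τ) = ∑_α (w α)/(1 + exp(2τ)·(λ α)²). Then the second derivative of Q at 0 equals ∑_α w α·(8·(λ α)⁴/(1 + (λ α)²)³ − 4·(λ α)²/(1 + (λ α)²)²), and this quantity is at most 8. -/
/-!
With `x = c e^{2τ}`, each summand of `Q` is a multiple of `g = (1 + x)⁻¹`, and `x' = 2x` gives
the Riccati-type equation `g' = -2 x g²`. Differentiating once more,
`g'' = 8 x² g³ - 4 x g²`, which at `τ = 0` is `(4c² - 4c)/(1 + c)³ ≤ 4/(1 + c)`.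
Summing against the weights and using the normalization `∑ w/(1 + c) = 1` bounds `Q''(0)` by `4`.
-/

open Real Finset

/-- For `c > 0` this is the logistic function evaluated at `-(2τ + log c)`. -/
noncomputable def logistic (c τ : ℝ) : ℝ := (1 + exp (2 * τ) * c)⁻¹

lemma hasDerivAt_exp_two_mul_mul (c τ : ℝ) :
    HasDerivAt (fun τ => exp (2 * τ) * c) (2 * (exp (2 * τ) * c)) τ := by
  refine ((((hasDerivAt_id' τ).const_mul 2).exp).mul_const c).congr_deriv ?_
  ring

section
variable {c : ℝ}

lemma one_add_exp_mul_pos (hc : 0 ≤ c) (τ : ℝ) : 0 < 1 + exp (2 * τ) * c := by positivity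

lemma contDiff_logistic (hc : 0 ≤ c) {n : WithTop ℕ∞} : ContDiff ℝ n (logistic c) := by
  unfold logistic
  exact ContDiff.inv (by fun_prop) fun τ => (one_add_exp_mul_pos hc τ).ne'

lemma hasDerivAt_logistic (hc : 0 ≤ c) (τ : ℝ) :
    HasDerivAt (logistic c) (-2 * (exp (2 * τ) * c) * logistic c τ ^ 2) τ := by
  refine (((hasDerivAt_exp_two_mul_mul c τ).const_add 1).inv
    (one_add_exp_mul_pos hc τ).ne').congr_deriv ?_
  simp only [logistic, inv_pow]
  ring

lemma deriv_logistic (hc : 0 ≤ c) :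
    deriv (logistic c) = fun τ => -2 * (exp (2 * τ) * c) * logistic c τ ^ 2 :=
  funext fun τ => (hasDerivAt_logistic hc τ).deriv

lemma iteratedDeriv_two_logistic (hc : 0 ≤ c) (τ : ℝ) :
    iteratedDeriv 2 (logistic c) τ =
      8 * (exp (2 * τ) * c) ^ 2 * logistic c τ ^ 3 - 4 * (exp (2 * τ) * c) * logistic c τ ^ 2 := by
  rw [iteratedDeriv_succ, iteratedDeriv_one, deriv_logistic hc]
  apply HasDerivAt.deriv
  refine (((hasDerivAt_exp_two_mul_mul c τ).const_mul (-2)).mul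
    ((hasDerivAt_logistic hc τ).pow 2)).congr_deriv ?_
  simp only [Pi.pow_apply]
  ring

lemma iteratedDeriv_two_logistic_zero (hc : 0 ≤ c) :
    iteratedDeriv 2 (logistic c) 0 = 8 * c ^ 2 / (1 + c) ^ 3 - 4 * c / (1 + c) ^ 2 := by
  simp only [iteratedDeriv_two_logistic hc, logistic, mul_zero, exp_zero, one_mul, div_eq_mul_inv,
    inv_pow]

lemma iteratedDeriv_two_logistic_zero_le (hc : 0 ≤ c) :
    iteratedDeriv 2 (logistic c) 0 ≤ 4 / (1 + c) := by
  rw [iteratedDeriv_two_logistic_zero hc, div_sub_div _ _ (by positivity) (by positivity),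
    div_le_div_iff₀ (by positivity) (by positivity)]
  nlinarith [sq_nonneg c]
end

/-- Odd-parity key estimate: with nonnegative weights `w` normalized so that
`∑_α w_α/(1 + λ_α²) = 1`, the second derivative at `0` of
`Q(τ) = ∑_α w_α/(1 + e^{2τ}·λ_α²)` equals
`∑_α w_α·(8·λ_α⁴/(1 + λ_α²)³ − 4·λ_α²/(1 + λ_α²)²)`, which is at most `8`. -/
theorem odd_parity_Q_second_deriv_bound
    (m : ℕ) (l w : Fin m → ℝ)
    (hw : ∀ α, 0 ≤ w α)
    (hnorm : ∑ α, w α / (1 + (l α) ^ 2) = 1)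
    (Q : ℝ → ℝ)
    (hQ : ∀ τ : ℝ, Q τ = ∑ α, w α / (1 + Real.exp (2 * τ) * (l α) ^ 2)) :
    iteratedDeriv 2 Q 0 =
        ∑ α, w α * (8 * (l α) ^ 4 / (1 + (l α) ^ 2) ^ 3
          - 4 * (l α) ^ 2 / (1 + (l α) ^ 2) ^ 2) ∧
      (∑ α, w α * (8 * (l α) ^ 4 / (1 + (l α) ^ 2) ^ 3
          - 4 * (l α) ^ 2 / (1 + (l α) ^ 2) ^ 2)) ≤ 8 := by
  have hQ_sum : Q = fun τ => ∑ α, w α * logistic (l α ^ 2) τ :=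
    funext fun τ => by simp only [hQ, logistic, div_eq_mul_inv]
  have hsum : iteratedDeriv 2 Q 0 = ∑ α, w α * iteratedDeriv 2 (logistic (l α ^ 2)) 0 := by
    rw [hQ_sum, iteratedDeriv_fun_sum fun α _ =>
      (contDiff_const.mul (contDiff_logistic (sq_nonneg (l α)))).contDiffAt]
    simp only [iteratedDeriv_const_mul_field]
  have hformula : ∑ α, w α * iteratedDeriv 2 (logistic (l α ^ 2)) 0 =
      ∑ α, w α * (8 * (l α) ^ 4 / (1 + (l α) ^ 2) ^ 3 - 4 * (l α) ^ 2 / (1 + (l α) ^ 2) ^ 2) :=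
    sum_congr rfl fun α _ => by rw [iteratedDeriv_two_logistic_zero (sq_nonneg _)]; ring
  refine ⟨hsum.trans hformula, ?_⟩
  calc _ = ∑ α, w α * iteratedDeriv 2 (logistic (l α ^ 2)) 0 := hformula.symm
    _ ≤ ∑ α, 4 * (w α / (1 + l α ^ 2)) := sum_le_sum fun α _ => by
        rw [mul_div_left_comm]
        exact mul_le_mul_of_nonneg_left (iteratedDeriv_two_logistic_zero_le (sq_nonneg _)) (hw α)
    _ = 4 := by rw [← mul_sum, hnorm, mul_one]
    _ ≤ 8 := by norm_num
end
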